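/- Let ω be a primitive cube root of unity in ℂ and let a, b be nonzero complex numbers with |ab| < 1. Then f(ωa, ωb) = ω·f(a,b) + (1 − ω)·f(a⁶b³, a³b⁶). -/

import Mathlib

/-!
Since `n(n+1)/2 + n(n-1)/2 = n²`, the `n`-th term of `f(ωa, ωb)` is `ω^(n²)` times that of
`f(a, b)`, and `ω^(n²)` is `1` or `ω` according as `3 ∣ n` or not. Hence
`f(ωa, ωb) - ω f(a, b)` is `(1 - ω)` times the sum of the terms of `f(a, b)` over `n = 3m`, and
these are exactly the terms of `f(a⁶b³, a³b⁶)`. The subtraction may be done termwise because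
`|ωa · ωb| = |ab| < 1`, so both series converge absolutely by the ratio test.
-/

/-- Ramanujan's theta function `f(a,b) = ∑_{n ∈ ℤ} a^(n(n+1)/2) * b^(n(n-1)/2)`. -/
noncomputable def ramanujanTheta (a b : ℂ) : ℂ :=
  ∑' n : ℤ, a ^ (n * (n + 1) / 2) * b ^ (n * (n - 1) / 2)

open Filter Topology

theorem zpow_add_of_nonneg₀ {G₀ : Type*} [GroupWithZero G₀] (a : G₀) {m n : ℤ}
    (hm : 0 ≤ m) (hn : 0 ≤ n) : a ^ (m + n) = a ^ m * a ^ n := by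
  lift m to ℕ using hm
  lift n to ℕ using hn
  exact_mod_cast pow_add a m n

theorem zpow_mul_self_of_pow_three_eq_one {G₀ : Type*} [GroupWithZero G₀] {x : G₀}
    (hx : x ^ 3 = 1) (n : ℤ) : x ^ (n * n) = if 3 ∣ n then 1 else x := by
  have hx₀ : x ≠ 0 := by rintro rfl; simp at hx
  have hcube (k : ℤ) : x ^ (3 * k) = 1 := by rw [zpow_mul]; norm_cast; rw [hx, one_zpow]
  obtain ⟨q, rfl | rfl | rfl⟩ : ∃ q, n = 3 * q ∨ n = 3 * q + 1 ∨ n = 3 * q + 2 :=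
    ⟨n / 3, by omega⟩
  · rw [if_pos (dvd_mul_right 3 q), show 3 * q * (3 * q) = 3 * (3 * q * q) by ring, hcube]
  · rw [if_neg (by omega), show (3 * q + 1) * (3 * q + 1) = 3 * (3 * q * q + 2 * q) + 1 by ring,
      zpow_add₀ hx₀, hcube, zpow_one, one_mul]
  · rw [if_neg (by omega),
      show (3 * q + 2) * (3 * q + 2) = 3 * (3 * q * q + 4 * q + 1) + 1 by ring,
      zpow_add₀ hx₀, hcube, zpow_one, one_mul]

theorem Int.tsum_ite_dvd {α : Type*} [AddCommMonoid α] [TopologicalSpace α] {k : ℤ}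
    (hk : k ≠ 0) (f : ℤ → α) : ∑' n, (if k ∣ n then f n else 0) = ∑' m, f (k * m) := by
  rw [← (mul_right_injective₀ hk).tsum_eq]
  · exact tsum_congr fun m => if_pos (dvd_mul_right k m)
  · intro n hn
    obtain ⟨m, rfl⟩ : k ∣ n := by_contra fun h => hn (if_neg h)
    exact ⟨m, rfl⟩

theorem Int.mul_succ_div_two_nonneg (n : ℤ) : 0 ≤ n * (n + 1) / 2 := by
  have : 0 ≤ n * (n + 1) := by rcases le_or_gt 0 n with h | h <;> nlinarith
  omega

theorem Int.mul_pred_div_two_nonneg (n : ℤ) : 0 ≤ n * (n - 1) / 2 := by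
  have : 0 ≤ n * (n - 1) := by rcases le_or_gt 1 n with h | h <;> nlinarith
  omega

noncomputable def ramanujanThetaTerm (a b : ℂ) (n : ℤ) : ℂ :=
  a ^ (n * (n + 1) / 2) * b ^ (n * (n - 1) / 2)

theorem ramanujanThetaTerm_neg (a b : ℂ) (n : ℤ) :
    ramanujanThetaTerm a b (-n) = ramanujanThetaTerm b a n := by
  rw [ramanujanThetaTerm, ramanujanThetaTerm, mul_comm, show -n * (-n + 1) = n * (n - 1) by ring,
    show -n * (-n - 1) = n * (n + 1) by ring]

theorem ramanujanThetaTerm_natCast_succ (a b : ℂ) (n : ℕ) :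
    ramanujanThetaTerm a b (n + 1) = a * (a * b) ^ n * ramanujanThetaTerm a b n := by
  have ha : ((n : ℤ) + 1) * ((n + 1) + 1) / 2 = n * (n + 1) / 2 + (n + 1) := by grind
  have hb : ((n : ℤ) + 1) * ((n + 1) - 1) / 2 = n * (n - 1) / 2 + n := by grind
  rw [ramanujanThetaTerm, ramanujanThetaTerm, ha, hb,
    zpow_add_of_nonneg₀ a (Int.mul_succ_div_two_nonneg n) (by positivity),
    zpow_add_of_nonneg₀ b (Int.mul_pred_div_two_nonneg n) (by positivity)]
  norm_cast
  ring

theorem ramanujanThetaTerm_mul_mul (c a b : ℂ) (n : ℤ) :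
    ramanujanThetaTerm (c * a) (c * b) n = c ^ (n * n) * ramanujanThetaTerm a b n := by
  have h : n * (n + 1) / 2 + n * (n - 1) / 2 = n * n := by
    have hdvd := (Int.even_mul_succ_self n).two_dvd
    grind
  rw [ramanujanThetaTerm, ramanujanThetaTerm, mul_zpow, mul_zpow, ← h,
    zpow_add_of_nonneg₀ c (Int.mul_succ_div_two_nonneg n) (Int.mul_pred_div_two_nonneg n)]
  ring

theorem ramanujanThetaTerm_three_mul (a b : ℂ) (m : ℤ) :
    ramanujanThetaTerm a b (3 * m) = ramanujanThetaTerm (a ^ 6 * b ^ 3) (a ^ 3 * b ^ 6) m := by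
  have hdvd₁ := (Int.even_mul_succ_self m).two_dvd
  have hdvd₂ := (Int.even_mul_pred_self m).two_dvd
  have ha : 3 * m * (3 * m + 1) / 2 = 6 * (m * (m + 1) / 2) + 3 * (m * (m - 1) / 2) := by grind
  have hb : 3 * m * (3 * m - 1) / 2 = 3 * (m * (m + 1) / 2) + 6 * (m * (m - 1) / 2) := by grind
  have h₁ := Int.mul_succ_div_two_nonneg m
  have h₂ := Int.mul_pred_div_two_nonneg m
  rw [ramanujanThetaTerm, ramanujanThetaTerm, ha, hb,
    zpow_add_of_nonneg₀ a (by positivity) (by positivity),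
    zpow_add_of_nonneg₀ b (by positivity) (by positivity), mul_zpow, mul_zpow]
  simp only [← zpow_natCast, ← zpow_mul]
  push_cast
  ring

theorem summable_norm_ramanujanThetaTerm_natCast {a b : ℂ} (hab : ‖a * b‖ < 1) :
    Summable fun n : ℕ => ‖ramanujanThetaTerm a b n‖ := by
  refine summable_of_ratio_norm_eventually_le (r := 1 / 2) (by norm_num) ?_
  have hlim : Tendsto (fun n : ℕ => ‖a‖ * ‖a * b‖ ^ n) atTop (𝓝 0) := by
    simpa using (tendsto_pow_atTop_nhds_zero_of_lt_one (norm_nonneg _) hab).const_mul ‖a‖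
  filter_upwards [hlim.eventually (ge_mem_nhds one_half_pos)] with n hn
  rw [norm_norm, norm_norm, Nat.cast_succ, ramanujanThetaTerm_natCast_succ, norm_mul, norm_mul,
    norm_pow]
  gcongr

theorem summable_ramanujanThetaTerm {a b : ℂ} (hab : ‖a * b‖ < 1) :
    Summable (ramanujanThetaTerm a b) := by
  refine .of_norm (.of_nat_of_neg (summable_norm_ramanujanThetaTerm_natCast hab) ?_)
  simpa only [ramanujanThetaTerm_neg] using
    summable_norm_ramanujanThetaTerm_natCast (by rwa [mul_comm] : ‖b * a‖ < 1)

theorem theta_cubic_transform_general (ω a b : ℂ) (hω : IsPrimitiveRoot ω 3)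
    (hab : ‖a * b‖ < 1) :
    ramanujanTheta (ω * a) (ω * b) =
      ω * ramanujanTheta a b + (1 - ω) * ramanujanTheta (a ^ 6 * b ^ 3) (a ^ 3 * b ^ 6) := by
  have hω₃ : ω ^ 3 = 1 := hω.pow_eq_one
  have hωab : ‖ω * a * (ω * b)‖ < 1 := by
    rwa [mul_mul_mul_comm, norm_mul (ω * ω), norm_mul,
      Complex.norm_eq_one_of_pow_eq_one hω₃ three_ne_zero, one_mul, one_mul]
  have hterm (n : ℤ) : ramanujanThetaTerm (ω * a) (ω * b) n - ω * ramanujanThetaTerm a b n =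
      if 3 ∣ n then (1 - ω) * ramanujanThetaTerm a b n else 0 := by
    rw [ramanujanThetaTerm_mul_mul, zpow_mul_self_of_pow_three_eq_one hω₃]
    split_ifs <;> ring
  rw [← sub_eq_iff_eq_add']
  calc ramanujanTheta (ω * a) (ω * b) - ω * ramanujanTheta a b
      = ∑' n, (ramanujanThetaTerm (ω * a) (ω * b) n - ω * ramanujanThetaTerm a b n) := by
        rw [(summable_ramanujanThetaTerm hωab).tsum_sub
          ((summable_ramanujanThetaTerm hab).mul_left ω), tsum_mul_left]
        rfl
    _ = ∑' m, (1 - ω) * ramanujanThetaTerm a b (3 * m) := by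
        rw [tsum_congr hterm, Int.tsum_ite_dvd three_ne_zero]
    _ = (1 - ω) * ramanujanTheta (a ^ 6 * b ^ 3) (a ^ 3 * b ^ 6) := by
        simp only [tsum_mul_left, ramanujanThetaTerm_three_mul]
        rfl

theorem theta_cubic_transform (ω a b : ℂ) (hω : IsPrimitiveRoot ω 3)
    (ha : a ≠ 0) (hb : b ≠ 0) (hab : ‖a * b‖ < 1) :
    ramanujanTheta (ω * a) (ω * b) =
      ω * ramanujanTheta a b + (1 - ω) * ramanujanTheta (a ^ 6 * b ^ 3) (a ^ 3 * b ^ 6) :=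
  theta_cubic_transform_general ω a b hω hab
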